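/- arXiv:math/0611746 — 3 statements merged into one kernel-verified Lean document; each statement's English description precedes it below -/
import Mathlib

section
/- Let L be a complex line bundle over X with an antilinear bundle isomorphism ĉ : L → L covering an involution c : X → X, and let a : X → ℂ* be the function with ĉ∘ĉ = a·id. Then the map ĉ_{L²} := (1/a) · (ĉ ⊗ ĉ) : L⊗L → L⊗L is a ℂ-antilinear involution covering c. In particular L⊗L admits a real structure. -/
/-- Let `L` be a complex line bundle over `X` (given here in a
trivialization with fibers `ℂ`) with an antilinear bundle isomorphism `ĉ` covering an
involution `c`, and let `a : X → ℂ*` be the function with `ĉ ∘ ĉ = a · id`,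
which satisfies `a = conj (a ∘ c)`.  Then the map
`ĉ_{L²} := (1/a) · (ĉ ⊗ ĉ)` on `L ⊗ L` — in the trivialization,
`ĉ_{L²}(x)(u) = a(c x)⁻¹ · (ĉ x 1)² · conj u` — is a `ℂ`-antilinear involution
covering `c`.  In particular `L ⊗ L` admits a real structure. -/
theorem square_line_bundle_real_structure
    {X : Type*} (c : X → X) (hc : Function.Involutive c)
    (chat : X → ℂ → ℂ)
    (hadd : ∀ x (v w : ℂ), chat x (v + w) = chat x v + chat x w)
    (hsmul : ∀ x (s v : ℂ), chat x (s * v) = (starRingEnd ℂ) s * chat x v)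
    (hbij : ∀ x, Function.Bijective (chat x))
    (a : X → ℂ) (ha0 : ∀ x, a x ≠ 0)
    (ha : ∀ x (v : ℂ), chat (c x) (chat x v) = a x * v)
    (hreal : ∀ x, a x = (starRingEnd ℂ) (a (c x))) :
    -- ĉ_{L²} is antilinear:
    (∀ x (s u : ℂ),
      (a (c x))⁻¹ * (chat x 1) ^ 2 * (starRingEnd ℂ) (s * u)
        = (starRingEnd ℂ) s * ((a (c x))⁻¹ * (chat x 1) ^ 2 * (starRingEnd ℂ) u)) ∧
    -- ĉ_{L²} is an involution (covering the involution c):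
    (∀ x (u : ℂ),
      (a (c (c x)))⁻¹ * (chat (c x) 1) ^ 2 *
        (starRingEnd ℂ) ((a (c x))⁻¹ * (chat x 1) ^ 2 * (starRingEnd ℂ) u) = u) := by
  have hb : ∀ x, (starRingEnd ℂ) (chat x 1) * chat (c x) 1 = a x := by
    intro x
    have h1 := ha x 1
    have h2 : chat (c x) (chat x 1) = (starRingEnd ℂ) (chat x 1) * chat (c x) 1 := by
      conv_lhs => rw [show chat x 1 = chat x 1 * 1 by ring, hsmul]
    rw [h2] at h1
    simpa using h1
  constructor
  · intro x s u
    rw [map_mul]; ring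
  · intro x u
    rw [hc x, map_mul, map_mul, map_inv₀, ← hreal, map_pow]
    have key : ((starRingEnd ℂ) (chat x 1) * chat (c x) 1) ^ 2 = a x ^ 2 := by
      rw [hb]
    have hax := ha0 x
    field_simp
    rw [Complex.conj_conj]
    linear_combination u * key
end

section
/- Let (V, g, ω) be a finite-dimensional real vector space with inner product g and symplectic form ω compatible via an almost complex structure, and let a : V → V be an endomorphism that is g-antiselfadjoint and satisfies g(u,v) = ω(u, a v). Let q = √(-a a*) = √(-a²) (positive square root with respect to g). Then j = a q⁻¹ is a complex structure (j² = -id) compatible with ω: ω(ju, jv) = ω(u,v) and ω(u, ju) > 0 for u ≠ 0. -/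
open scoped RealInnerProductSpace

/-- Let `(V, g, ω)` be a finite-dimensional real inner product space
with a bilinear form `ω` and an invertible `g`-antiselfadjoint endomorphism `a`
satisfying `g(u,v) = ω(u, a v)`.  Let `q` be the positive symmetric square root of
`-a² = a a*`, and let `j` be the endomorphism with `j ∘ q = a` (i.e. `j = a q⁻¹`).
Then `j` is a complex structure (`j² = -id`) compatible with `ω`:
`ω(ju, jv) = ω(u,v)` and `ω(u, ju) > 0` for `u ≠ 0`. -/
theorem polar_decomposition_gives_compatible_complex_structure
    {V : Type*} [NormedAddCommGroup V] [InnerProductSpace ℝ V] [FiniteDimensional ℝ V]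
    (ω : V →ₗ[ℝ] V →ₗ[ℝ] ℝ) (a q j : V →ₗ[ℝ] V)
    (ha_skew : ∀ u v : V, ⟪a u, v⟫ = -⟪u, a v⟫)
    (ha_bij : Function.Bijective a)
    (hcompat : ∀ u v : V, ⟪u, v⟫ = ω u (a v))
    (hq_sym : ∀ u v : V, ⟪q u, v⟫ = ⟪u, q v⟫)
    (hq_pos : ∀ v : V, v ≠ 0 → 0 < ⟪q v, v⟫)
    (hq_sq : ∀ v : V, q (q v) = -(a (a v)))
    (hj : ∀ v : V, j (q v) = a v) :
    (∀ v : V, j (j v) = -v) ∧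
    (∀ u v : V, ω (j u) (j v) = ω u v) ∧
    (∀ u : V, u ≠ 0 → 0 < ω u (j u)) := by
  have hself : ∀ x : V, x ≠ 0 → 0 < ⟪x, x⟫ := fun x hx =>
    lt_of_le_of_ne real_inner_self_nonneg (fun h => hx (real_inner_self_nonpos.mp h.ge))
  -- q is injective, hence bijective
  have hq_inj : Function.Injective q := by
    rw [← LinearMap.ker_eq_bot, Submodule.eq_bot_iff]
    intro v hv
    by_contra hv0
    have h := hq_pos v hv0
    rw [LinearMap.mem_ker.mp hv] at h
    simp at h
  have hq_surj : Function.Surjective q := (LinearMap.injective_iff_surjective).mp hq_inj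
  -- the commutator d = a∘q - q∘a anticommutes with q
  set d : V →ₗ[ℝ] V := a ∘ₗ q - q ∘ₗ a with hd
  have hanti : ∀ v : V, q (d v) = -(d (q v)) := by
    intro v
    simp only [hd, LinearMap.sub_apply, LinearMap.comp_apply, map_sub]
    have h1 : q (q (a v)) = -(a (a (a v))) := hq_sq (a v)
    have h2 : a (q (q v)) = -(a (a (a v))) := by rw [hq_sq v, map_neg]
    rw [h1]
    rw [← h2]
    abel
  have hqsymm : q.IsSymmetric := fun u v => hq_sym u v
  -- d vanishes on each eigenspace of q
  have heig : ∀ (μ : ℝ) (v : V), v ∈ Module.End.eigenspace q μ → d v = 0 := by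
    intro μ v hv
    rcases eq_or_ne v 0 with rfl | hv0
    · simp
    have hqv : q v = μ • v := Module.End.mem_eigenspace_iff.mp hv
    have hμpos : 0 < μ := by
      have h := hq_pos v hv0
      rw [hqv, real_inner_smul_left] at h
      have hnorm : 0 < ⟪v, v⟫ := hself v hv0
      nlinarith
    by_contra hdv0
    have h := hq_pos (d v) hdv0
    have hmu : q (d v) = (-μ) • d v := by
      rw [hanti v, hqv, map_smul, neg_smul]
    rw [hmu, real_inner_smul_left] at h
    have hnorm : 0 < ⟪d v, d v⟫ := hself (d v) hdv0
    nlinarith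
  -- hence d = 0, i.e. a and q commute
  have htop : (⨆ μ : ℝ, Module.End.eigenspace q μ) = ⊤ :=
    Submodule.orthogonal_eq_bot_iff.mp hqsymm.orthogonalComplement_iSup_eigenspaces_eq_bot
  have hcomm : ∀ v : V, a (q v) = q (a v) := by
    intro v
    have hv : v ∈ (⨆ μ : ℝ, Module.End.eigenspace q μ) := htop ▸ Submodule.mem_top
    have hdv : d v = 0 := by
      refine Submodule.iSup_induction (motive := fun x => d x = 0) _ hv
        (fun μ x hx => heig μ x hx) (by simp) ?_
      intro x y hx hy
      rw [map_add, hx, hy, add_zero]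
    have := hdv
    simp only [hd, LinearMap.sub_apply, LinearMap.comp_apply, sub_eq_zero] at this
    exact this
  refine ⟨?_, ?_, ?_⟩
  · -- j² = -id
    intro v
    obtain ⟨w, hw⟩ := hq_surj v
    obtain ⟨s, hs⟩ := hq_surj w
    have h1 : j v = a w := by rw [← hw, hj]
    have h2 : a w = q (a s) := by rw [← hs, hcomm]
    rw [h1, h2, hj, ← hw, ← hs, hq_sq, neg_neg]
  · -- ω-invariance
    intro u v
    obtain ⟨s, hs⟩ := hq_surj u
    obtain ⟨w, hw⟩ := hq_surj v
    obtain ⟨r, hr⟩ := ha_bij.2 w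
    have hju : j u = a s := by rw [← hs, hj]
    have hjv : j v = a (a r) := by
      rw [← hw, ← hr]; exact hj (a r)
    rw [hju, hjv, ← hcompat (a s) (a r), ← hw, ← hr, ← hcomm r,
      ← hcompat u (q r), ← hs, hq_sym, hq_sq, inner_neg_right]
    exact ha_skew s (a r)
  · -- positivity
    intro u hu
    obtain ⟨s, hs⟩ := hq_surj u
    have hs0 : s ≠ 0 := by rintro rfl; exact hu (by simp [← hs])
    have hju : j u = a s := by rw [← hs, hj]
    rw [hju, ← hcompat u s, ← hs]
    exact hq_pos s hs0
end

section
/- Let a be an endomorphism of a finite-dimensional real inner product space with a* = -a and ‖a² + id‖ ≤ δ < 1. Then the complex structure j = a(√(a a*))⁻¹ obtained by polar decomposition satisfies ‖j - a‖ ≤ Cδ for a constant C depending only on δ₀ < 1 (uniform for δ ≤ δ₀). -/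
open scoped RealInnerProductSpace

/-- Let `a` be an endomorphism of a finite-dimensional real inner
product space with `a* = -a` and `‖a² + id‖ ≤ δ ≤ δ₀ < 1`.  Then the complex structure
`j = a (√(a a*))⁻¹` obtained by polar decomposition (here `q` is the positive symmetric
square root of `a a* = -a²` and `j ∘ q = a`) satisfies `‖j - a‖ ≤ C δ` for a constant
`C` depending only on `δ₀`. -/
theorem polar_complex_structure_close_to_approximate_one
    (δ₀ : ℝ) (hδ₀ : 0 < δ₀) (hδ₀1 : δ₀ < 1) :
    ∃ C : ℝ, 0 < C ∧
      ∀ (V : Type) [NormedAddCommGroup V] [InnerProductSpace ℝ V] [FiniteDimensional ℝ V],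
        ∀ (a q j : V →L[ℝ] V) (δ : ℝ),
          (∀ u v : V, ⟪a u, v⟫ = -⟪u, a v⟫) →
          (∀ u v : V, ⟪q u, v⟫ = ⟪u, q v⟫) →
          (∀ v : V, v ≠ 0 → 0 < ⟪q v, v⟫) →
          (∀ v : V, q (q v) = -(a (a v))) →
          (∀ v : V, j (q v) = a v) →
          ‖a.comp a + ContinuousLinearMap.id ℝ V‖ ≤ δ → δ ≤ δ₀ →
          ‖j - a‖ ≤ C * δ := by
  refine ⟨1, one_pos, ?_⟩
  intro V _ _ _ a q j δ ha hq hqpos hq2 hjq hnorm hδδ₀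
  have hδ0 : 0 ≤ δ := le_trans (norm_nonneg _) hnorm
  -- symmetry of q as a linear map
  have hsym : LinearMap.IsSymmetric (q : V →ₗ[ℝ] V) := fun u v => hq u v
  set n := Module.finrank ℝ V with hn
  have hfr : Module.finrank ℝ V = n := rfl
  set b := hsym.eigenvectorBasis hfr with hb
  set μ := hsym.eigenvalues hfr with hμ
  have hbi : ∀ i, q (b i) = μ i • b i := fun i => hsym.apply_eigenvectorBasis hfr i
  have hbnorm : ∀ i, ‖b i‖ = 1 := fun i => b.orthonormal.1 i
  -- eigenvalue bounds
  have hμpos : ∀ i, 0 < μ i := by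
    intro i
    have hb0 : b i ≠ 0 := by
      intro h
      have := hbnorm i
      rw [h, norm_zero] at this; norm_num at this
    have := hqpos (b i) hb0
    rw [hbi i, real_inner_smul_left, real_inner_self_eq_norm_sq, hbnorm i] at this
    nlinarith
  have hμclose : ∀ i, |μ i - 1| ≤ δ := by
    intro i
    have h1 : ‖(a.comp a + ContinuousLinearMap.id ℝ V) (b i)‖ ≤ δ * ‖b i‖ :=
      (a.comp a + ContinuousLinearMap.id ℝ V).le_of_opNorm_le hnorm (b i)
    have h2 : (a.comp a + ContinuousLinearMap.id ℝ V) (b i) = (1 - μ i ^ 2) • b i := by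
      have : a (a (b i)) = -(q (q (b i))) := by rw [hq2, neg_neg]
      simp only [ContinuousLinearMap.add_apply, ContinuousLinearMap.comp_apply,
        ContinuousLinearMap.id_apply, this, hbi i, map_smul, hbi i]
      rw [smul_smul]
      module
    rw [h2, norm_smul, hbnorm i, Real.norm_eq_abs] at h1
    simp only [mul_one] at h1
    have hpos := hμpos i
    rw [abs_le] at h1 ⊢
    constructor <;> nlinarith [h1.1, h1.2]
  -- ‖q v - v‖ ≤ δ ‖v‖
  have hqid : ∀ v : V, ‖q v - v‖ ≤ δ * ‖v‖ := by
    intro v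
    have hrepr : ∀ w : V, ‖w‖ = Real.sqrt (∑ i, (b.repr w i) ^ 2) := by
      intro w
      rw [← b.repr.norm_map w, EuclideanSpace.norm_eq]
      congr 1
      apply Finset.sum_congr rfl
      intro i _
      rw [Real.norm_eq_abs, sq_abs]
    have hcoef : ∀ i, b.repr (q v - v) i = (μ i - 1) * b.repr v i := by
      intro i
      rw [map_sub]
      simp only [PiLp.sub_apply]
      rw [b.repr_apply_apply, b.repr_apply_apply]
      rw [← hq (b i) v, hbi i, real_inner_smul_left]
      ring
    rw [hrepr (q v - v), hrepr v]
    rw [← Real.sqrt_sq hδ0, ← Real.sqrt_mul (sq_nonneg δ)]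
    apply Real.sqrt_le_sqrt
    rw [Finset.mul_sum]
    apply Finset.sum_le_sum
    intro i _
    rw [hcoef i, mul_pow]
    have h1 : (μ i - 1) ^ 2 ≤ δ ^ 2 := by
      have := hμclose i
      nlinarith [abs_nonneg (μ i - 1), sq_abs (μ i - 1), this]
    nlinarith [sq_nonneg (b.repr v i)]
  -- q is surjective
  have hqsurj : Function.Surjective q := by
    have hinj : Function.Injective (q : V →ₗ[ℝ] V) := by
      rw [← LinearMap.ker_eq_bot, LinearMap.ker_eq_bot']
      intro v hv
      by_contra h
      have := hqpos v h
      rw [show (q : V →ₗ[ℝ] V) v = q v from rfl] at hv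
      rw [hv] at this
      simp at this
    exact (LinearMap.injective_iff_surjective.mp hinj)
  -- j is an isometry
  have hjiso : ∀ v : V, ‖j v‖ = ‖v‖ := by
    intro v
    obtain ⟨u, rfl⟩ := hqsurj v
    rw [hjq u]
    have h1 : ‖a u‖ ^ 2 = ‖q u‖ ^ 2 := by
      rw [← real_inner_self_eq_norm_sq, ← real_inner_self_eq_norm_sq]
      rw [ha u (a u)]
      have h2 : a (a u) = -(q (q u)) := by rw [hq2, neg_neg]
      rw [h2, inner_neg_right, neg_neg, ← hq u (q u)]
    have h3 := congrArg Real.sqrt h1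
    rwa [Real.sqrt_sq (norm_nonneg _), Real.sqrt_sq (norm_nonneg _)] at h3
  -- conclude
  rw [one_mul]
  apply ContinuousLinearMap.opNorm_le_bound _ hδ0
  intro v
  have : (j - a) v = j (v - q v) := by
    rw [map_sub, ContinuousLinearMap.sub_apply, hjq v]
  rw [this, hjiso, norm_sub_rev]
  exact hqid v
end
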